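/- Suppose K = G ⋈ H is an internal Zappa–Szép product of monoids, G is atomic, and for every h ∈ H the map a ↦ h ▷ a is surjective on the set of atoms of G. Then for every h ∈ H, the map g ↦ h ▷ g is surjective on all of G. -/

import Mathlib

namespace ZSPaper

/-- Internal Zappa–Szép product: every element of `K` has a unique `GH`-decomposition
and a unique `HG`-decomposition. -/
structure ZS (K : Type*) [Monoid K] (G H : Submonoid K) : Prop where
  exGH : ∀ k : K, ∃! p : G × H, (p.1 : K) * (p.2 : K) = k
  exHG : ∀ k : K, ∃! p : H × G, (p.1 : K) * (p.2 : K) = k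

variable {K : Type*} [Monoid K] {G H : Submonoid K}

/-- `h ▷ g`, defined by `h * g = (h ▷ g) * (h ◁ g)`. -/
noncomputable def ZS.rtr (zs : ZS K G H) (h : H) (g : G) : G :=
  ((zs.exGH ((h : K) * (g : K))).choose).1

/-- `h ◁ g`, defined by `h * g = (h ▷ g) * (h ◁ g)`. -/
noncomputable def ZS.rtl (zs : ZS K G H) (h : H) (g : G) : H :=
  ((zs.exGH ((h : K) * (g : K))).choose).2

/-- `g ▶ h`, defined by `g * h = (g ▶ h) * (g ◀ h)`. -/
noncomputable def ZS.ltr (zs : ZS K G H) (g : G) (h : H) : H :=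
  ((zs.exHG ((g : K) * (h : K))).choose).1

/-- `g ◀ h`, defined by `g * h = (g ▶ h) * (g ◀ h)`. -/
noncomputable def ZS.ltl (zs : ZS K G H) (g : G) (h : H) : G :=
  ((zs.exHG ((g : K) * (h : K))).choose).2

/-- Right divisibility: `x` is a suffix of `y`. -/
def RDvd {M : Type*} [Monoid M] (x y : M) : Prop := ∃ u, y = u * x

/-- An atom of a monoid. -/
def MAtom {M : Type*} [Monoid M] (a : M) : Prop :=
  a ≠ 1 ∧ ∀ u v : M, a = u * v → u = 1 ∨ v = 1

/-- An atomic monoid: generated by its atoms, with bounded lengths of atomic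
decompositions. -/
def Atomic (M : Type*) [Monoid M] : Prop :=
  (∀ x : M, ∃ l : List M, (∀ a ∈ l, MAtom a) ∧ l.prod = x) ∧
  ∀ x : M, ∃ N : ℕ, ∀ l : List M, (∀ a ∈ l, MAtom a) → l.prod = x → l.length ≤ N

/-- `m` is the least common upper bound of the set `S` with respect to
left divisibility. -/
def IsDvdLUB {M : Type*} [Monoid M] (S : Set M) (m : M) : Prop :=
  (∀ s ∈ S, s ∣ m) ∧ ∀ n, (∀ s ∈ S, s ∣ n) → m ∣ n

/-- `m` is the least common upper bound of `x` and `y` with respect to left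
divisibility. -/
def IsDvdLCM {M : Type*} [Monoid M] (x y m : M) : Prop :=
  x ∣ m ∧ y ∣ m ∧ ∀ n, x ∣ n → y ∣ n → m ∣ n

/-- `d = Δ_x`, the least common upper bound of `{ y \ x : y ∈ M }`, where
`y * (y \ x) = y ∨ x`. -/
def IsDeltaOf {M : Type*} [Monoid M] (x d : M) : Prop :=
  IsDvdLUB {t : M | ∃ y, IsDvdLCM y x (y * t)} d

/-- A Garside structure on a monoid `M` with Garside element `Δ`. -/
structure GarsideStructure (M : Type*) [Monoid M] (Δ : M) : Prop where
  mul_left_cancel : ∀ a b c : M, a * b = a * c → b = c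
  mul_right_cancel : ∀ a b c : M, b * a = c * a → b = c
  atomic : Atomic M
  meet_left : ∀ x y : M, ∃ d, d ∣ x ∧ d ∣ y ∧ ∀ e, e ∣ x → e ∣ y → e ∣ d
  join_left : ∀ x y : M, ∃ m, x ∣ m ∧ y ∣ m ∧ ∀ n, x ∣ n → y ∣ n → m ∣ n
  meet_right : ∀ x y : M, ∃ d, RDvd d x ∧ RDvd d y ∧ ∀ e, RDvd e x → RDvd e y → RDvd e d
  join_right : ∀ x y : M, ∃ m, RDvd x m ∧ RDvd y m ∧ ∀ n, RDvd x n → RDvd y n → RDvd m n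
  balanced : ∀ x, x ∣ Δ ↔ RDvd x Δ
  div_finite : {x : M | x ∣ Δ}.Finite
  div_gen : Submonoid.closure {x : M | x ∣ Δ} = ⊤

end ZSPaper

open ZSPaper Function

/-! The action `g ↦ h ▷ g` satisfies `h ▷ 1 = 1` and `h ▷ (a * b) = (h ▷ a) * ((h ◁ a) ▷ b)`.
Hence the elements of `G` lying in the image of `h ▷ ·` for *every* `h` form a submonoid:
to hit `a * b`, first hit `a` from `h`, then hit `b` from `h ◁ a`. By hypothesis this
submonoid contains all atoms, and `G` is generated by its atoms. -/

namespace ZSPaper.ZS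

variable {K : Type*} [Monoid K] {G H : Submonoid K} (zs : ZS K G H)

lemma rtr_mul_rtl (h : H) (g : G) :
    (zs.rtr h g : K) * (zs.rtl h g : K) = (h : K) * g :=
  (zs.exGH ((h : K) * g)).choose_spec.1

lemma rtr_eq_of_mul_eq {h : H} {g g' : G} {h' : H} (e : (g' : K) * (h' : K) = (h : K) * g) :
    zs.rtr h g = g' :=
  congrArg Prod.fst ((zs.exGH ((h : K) * g)).choose_spec.2 (g', h') e).symm

lemma rtr_one (h : H) : zs.rtr h 1 = 1 :=
  zs.rtr_eq_of_mul_eq (h' := h) (by simp)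

lemma rtr_mul (h : H) (a b : G) :
    zs.rtr h (a * b) = zs.rtr h a * zs.rtr (zs.rtl h a) b := by
  refine zs.rtr_eq_of_mul_eq (h' := zs.rtl (zs.rtl h a) b) ?_
  push_cast
  rw [mul_assoc, zs.rtr_mul_rtl, ← mul_assoc, zs.rtr_mul_rtl, mul_assoc]

def rtrCommonRange : Submonoid G where
  carrier := {g | ∀ h : H, g ∈ Set.range (zs.rtr h)}
  one_mem' h := ⟨1, zs.rtr_one h⟩
  mul_mem' {a b} ha hb h := by
    obtain ⟨a', rfl⟩ := ha h
    obtain ⟨b', rfl⟩ := hb (zs.rtl h a')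
    exact ⟨a' * b', zs.rtr_mul h a' b'⟩

lemma mem_rtrCommonRange {g : G} : g ∈ zs.rtrCommonRange ↔ ∀ h : H, ∃ b, zs.rtr h b = g :=
  Iff.rfl

end ZSPaper.ZS

theorem stmt8 {K : Type*} [Monoid K] {G H : Submonoid K} (zs : ZS K G H)
    (hat : Atomic G)
    (hsurj : ∀ (h : H) (a : G), MAtom a → ∃ b : G, MAtom b ∧ zs.rtr h b = a) :
    ∀ h : H, Function.Surjective (zs.rtr h) := by
  intro h g
  obtain ⟨l, hl, rfl⟩ := hat.1 g
  have hatoms : ∀ a ∈ l, a ∈ zs.rtrCommonRange := fun a ha =>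
    zs.mem_rtrCommonRange.2 fun h' =>
      let ⟨b, _, hb⟩ := hsurj h' a (hl a ha)
      ⟨b, hb⟩
  exact zs.mem_rtrCommonRange.1 (zs.rtrCommonRange.list_prod_mem hatoms) h
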